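/- arXiv:2508.15446 — 5 statements merged into one kernel-verified Lean document; each statement's English description precedes it below -/
import Mathlib

section
/- Let p ∈ (0,1), let ε > 0 and 0 ≤ ε' ≤ ε. Then for all real numbers s and t it holds ψ_ε(t²) + ψ_ε'(t²)·(s² − t²) ≥ ψ_{ε'}(s²); in particular (case ε' = ε) the tangent linearization of ψ_ε at t² majorizes ψ_ε, and (case ε' = 0) it majorizes |s|^p. -/
/-- The smooth approximation `ψ_ε` of `t ↦ t^{p/2}`:
`ψ_ε(t) = (p/2)·t/ε^{2−p} + (1 − p/2)·ε^p` for `0 ≤ t < ε²` and `ψ_ε(t) = t^{p/2}` for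
`t ≥ ε²` (so `ψ_0(t) = t^{p/2}`). Exponents are real powers. -/
noncomputable def psi (p ε t : ℝ) : ℝ :=
  if t < ε ^ 2 then p / 2 * t / ε ^ (2 - p) + (1 - p / 2) * ε ^ p
  else t ^ (p / 2)

/-- The derivative `ψ_ε'(t) = (p/2)·min(ε^{p−2}, t^{(p−2)/2})` of `ψ_ε` (for `ε > 0`);
since `t^{(p−2)/2} ≥ ε^{p−2}` precisely for `0 ≤ t ≤ ε²`, the minimum is the first
entry on `[0, ε²)` and the second one on `[ε², ∞)`. -/
noncomputable def psiDeriv (p ε t : ℝ) : ℝ :=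
  if t < ε ^ 2 then p / 2 * ε ^ (p - 2) else p / 2 * t ^ ((p - 2) / 2)

open Real

private lemma bern {q y x : ℝ} (hq0 : 0 < q) (hq1 : q ≤ 1) (hy : 0 < y) (hx : 0 ≤ x) :
    x ^ q ≤ y ^ q + q * y ^ (q - 1) * (x - y) := by
  have hs : (-1:ℝ) ≤ x / y - 1 := by
    have : 0 ≤ x / y := div_nonneg hx hy.le
    linarith
  have h := rpow_one_add_le_one_add_mul_self hs hq0.le hq1
  have hxy : (x / y) ^ q ≤ 1 + q * (x / y - 1) := by
    have : (1 + (x / y - 1)) = x / y := by ring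
    rwa [this] at h
  have hYpos : (0:ℝ) < y ^ q := Real.rpow_pos_of_pos hy q
  have hdiv : (x / y) ^ q = x ^ q / y ^ q := Real.div_rpow hx hy.le q
  have hy1 : y ^ (q - 1) = y ^ q / y := by
    rw [Real.rpow_sub hy, Real.rpow_one]
  rw [hdiv] at hxy
  rw [hy1]
  have := mul_le_mul_of_nonneg_left hxy hYpos.le
  have hne : y ^ q ≠ 0 := hYpos.ne'
  rw [mul_div_cancel₀ _ hne] at this
  have hyne : y ≠ 0 := hy.ne'
  calc x ^ q ≤ y ^ q * (1 + q * (x / y - 1)) := this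
    _ = y ^ q + q * (y ^ q / y) * (x - y) := by field_simp

section facts
variable {p ε : ℝ}

lemma F1 (hε : 0 < ε) : ((ε^2:ℝ)) ^ (p/2) = ε ^ p := by
  rw [← Real.rpow_natCast ε 2, ← Real.rpow_mul hε.le]
  congr 1
  push_cast; ring

lemma F2 (hε : 0 < ε) : ((ε^2:ℝ)) ^ (p/2 - 1) = ε ^ (p - 2) := by
  rw [← Real.rpow_natCast ε 2, ← Real.rpow_mul hε.le]
  congr 1
  push_cast; ring

lemma F3 (p : ℝ) {ε : ℝ} (hε : 0 < ε) : ε ^ (p - 2) * ε ^ 2 = ε ^ p := by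
  rw [← Real.rpow_natCast ε 2, ← Real.rpow_add hε]
  congr 1
  push_cast; ring

lemma F4 (hε : 0 < ε) : ε ^ (2 - p) = (ε ^ (p - 2))⁻¹ := by
  rw [← Real.rpow_neg hε.le]
  congr 1; ring

end facts

/-- Monotonicity of `ψ` in `ε`. -/
lemma psi_mono_eps {p ε ε' b : ℝ} (hp0 : 0 < p) (hp1 : p < 1) (hε : 0 < ε)
    (hε'0 : 0 ≤ ε') (hε' : ε' ≤ ε) (hb : 0 ≤ b) : psi p ε' b ≤ psi p ε b := by
  have hq0 : 0 < p / 2 := by linarith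
  have hq1 : p / 2 ≤ 1 := by linarith
  have he2 : (0:ℝ) < ε ^ 2 := by positivity
  have hee : ε' ^ 2 ≤ ε ^ 2 := by nlinarith
  unfold psi
  by_cases hB' : b < ε' ^ 2
  · have hε'pos : 0 < ε' := by
      rcases hε'0.lt_or_eq with h | h
      · exact h
      · exfalso; rw [← h] at hB'; nlinarith
    have hB : b < ε ^ 2 := lt_of_lt_of_le hB' hee
    rw [if_pos hB', if_pos hB, F4 hε, F4 hε'pos, div_inv_eq_mul, div_inv_eq_mul]
    have hbern : ((ε'^2:ℝ)) ^ (p/2) ≤ (ε^2) ^ (p/2) + (p/2) * (ε^2) ^ (p/2 - 1) * (ε'^2 - ε^2) :=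
      bern hq0 hq1 he2 (by positivity)
    rw [F1 hε, F1 hε'pos, F2 hε] at hbern
    have hant : ε ^ (p - 2) ≤ ε' ^ (p - 2) :=
      Real.rpow_le_rpow_of_nonpos hε'pos hε' (by linarith)
    have h5 : 0 ≤ (ε' ^ (p-2) - ε ^ (p-2)) * (ε' ^ 2 - b) := by
      apply mul_nonneg <;> linarith
    nlinarith [F3 p hε, F3 p hε'pos, mul_nonneg hq0.le h5]
  · by_cases hB : b < ε ^ 2
    · rw [if_neg hB', if_pos hB, F4 hε, div_inv_eq_mul]
      have hbern : b ^ (p/2) ≤ (ε^2) ^ (p/2) + (p/2) * (ε^2) ^ (p/2 - 1) * (b - ε^2) :=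
        bern hq0 hq1 he2 hb
      rw [F1 hε, F2 hε] at hbern
      nlinarith [F3 p hε]
    · rw [if_neg hB', if_neg hB]

/-- Tangent line of `ψ_ε` majorizes `ψ_ε`. -/
lemma psi_tangent {p ε a b : ℝ} (hp0 : 0 < p) (hp1 : p < 1) (hε : 0 < ε)
    (ha : 0 ≤ a) (hb : 0 ≤ b) :
    psi p ε b ≤ psi p ε a + psiDeriv p ε a * (b - a) := by
  have hq0 : 0 < p / 2 := by linarith
  have hq1 : p / 2 ≤ 1 := by linarith
  have he2 : (0:ℝ) < ε ^ 2 := by positivity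
  have hexp : (p - 2) / 2 = p / 2 - 1 := by ring
  unfold psi psiDeriv
  by_cases hA : a < ε ^ 2 <;> by_cases hB : b < ε ^ 2
  · rw [if_pos hA, if_pos hB, if_pos hA, F4 hε, div_inv_eq_mul, div_inv_eq_mul]
    nlinarith []
  · rw [if_pos hA, if_neg hB, if_pos hA, F4 hε, div_inv_eq_mul]
    have hbern : b ^ (p/2) ≤ (ε^2) ^ (p/2) + (p/2) * (ε^2) ^ (p/2 - 1) * (b - ε^2) :=
      bern hq0 hq1 he2 hb
    rw [F1 hε, F2 hε] at hbern
    nlinarith [F3 p hε]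
  · rw [if_neg hA, if_pos hB, if_neg hA, F4 hε, div_inv_eq_mul, hexp]
    have hapos : 0 < a := lt_of_lt_of_le he2 (not_lt.1 hA)
    have hbern : ((ε^2:ℝ)) ^ (p/2) ≤ a ^ (p/2) + (p/2) * a ^ (p/2 - 1) * (ε^2 - a) :=
      bern hq0 hq1 hapos (by positivity)
    rw [F1 hε] at hbern
    have hant : a ^ (p/2 - 1) ≤ (ε^2) ^ (p/2 - 1) :=
      Real.rpow_le_rpow_of_nonpos he2 (not_lt.1 hA) (by linarith)
    rw [F2 hε] at hant
    have h5 : 0 ≤ (ε ^ (p-2) - a ^ (p/2 - 1)) * (ε ^ 2 - b) := by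
      apply mul_nonneg <;> linarith
    nlinarith [F3 p hε, mul_nonneg hq0.le h5]
  · rw [if_neg hA, if_neg hB, if_neg hA, hexp]
    have hapos : 0 < a := lt_of_lt_of_le he2 (not_lt.1 hA)
    have := bern hq0 hq1 hapos hb
    linarith [bern hq0 hq1 hapos hb]

/-- for `p ∈ (0,1)`, `ε > 0` and `0 ≤ ε' ≤ ε`, the tangent linearization of
`ψ_ε` at `t²` majorizes `ψ_{ε'}` at `s²`:
`ψ_ε(t²) + ψ_ε'(t²)·(s² − t²) ≥ ψ_{ε'}(s²)` for all real `s, t`. -/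
theorem psi_linearization_majorizes (p ε ε' : ℝ) (hp0 : 0 < p) (hp1 : p < 1)
    (hε : 0 < ε) (hε'0 : 0 ≤ ε') (hε' : ε' ≤ ε) (s t : ℝ) :
    psi p ε' (s ^ 2) ≤ psi p ε (t ^ 2) + psiDeriv p ε (t ^ 2) * (s ^ 2 - t ^ 2) :=
  le_trans (psi_mono_eps hp0 hp1 hε hε'0 hε' (sq_nonneg s))
    (psi_tangent hp0 hp1 hε (sq_nonneg t) (sq_nonneg s))
end

section
/- Let Ω ⊂ ℝ^d (d ≥ 1) be a bounded domain, let p ∈ (0,1), let ε > 0 and 0 ≤ ε' ≤ ε, and let u, w ∈ L²(Ω). Then all integrals below are finite and ∫_Ω [ψ_ε(u(x)²) + ψ_ε'(u(x)²)·(w(x)² − u(x)²)] dx ≥ ∫_Ω ψ_{ε'}(w(x)²) dx. -/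
open MeasureTheory Filter Topology

/-! For `p ≤ 2` the map `t ↦ t^{p/2}` is concave, so it lies below its tangent lines, and of two
tangent lines the one touching further right is the higher one to the left of both touching points.
The linear branch of `ψ_ε` is the tangent at `ε²`, and `ψ_ε(t) + ψ_ε'(t)(s − t)` is the tangent at
`max(ε², t)`; comparing tangents gives `ψ_{ε'}(s) ≤ ψ_ε(s) ≤ ψ_ε(t) + ψ_ε'(t)(s − t)` for `s ≥ 0`.
Take `s = w²`, `t = u²` and integrate: the linearization grows at most linearly in `u²` and `w²`,
which makes everything integrable on the finite-measure set `Ω`. -/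

theorem sq_rpow_half {ε : ℝ} (hε : 0 ≤ ε) (q : ℝ) : (ε ^ 2) ^ (q / 2) = ε ^ q := by
  rw [← Real.rpow_natCast, ← Real.rpow_mul hε]
  congr 1
  ring

noncomputable def rpowTangent (r t s : ℝ) : ℝ := t ^ r + r * t ^ (r - 1) * (s - t)

section rpowTangent

variable {r t s : ℝ}

theorem rpowTangent_add_mul_sub (r t s s' : ℝ) :
    rpowTangent r t s + r * t ^ (r - 1) * (s' - s) = rpowTangent r t s' := by
  unfold rpowTangent
  ring

/-- Bernoulli's inequality applied to `s / t = 1 + (s / t - 1)`. -/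
theorem rpow_le_rpowTangent (hr0 : 0 ≤ r) (hr1 : r ≤ 1) (ht : 0 < t) (hs : 0 ≤ s) :
    s ^ r ≤ rpowTangent r t s := by
  have hbern : (s / t) ^ r ≤ 1 + r * (s / t - 1) := by
    simpa using rpow_one_add_le_one_add_mul_self
      (by linarith [div_nonneg hs ht.le] : -1 ≤ s / t - 1) hr0 hr1
  rw [Real.div_rpow hs ht.le, div_le_iff₀ (Real.rpow_pos_of_pos ht r)] at hbern
  calc s ^ r ≤ (1 + r * (s / t - 1)) * t ^ r := hbern
    _ = rpowTangent r t s := by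
      rw [rpowTangent, Real.rpow_sub_one ht.ne']
      field_simp

/-- At `s = a` this is `rpow_le_rpowTangent`; left of `a` the tangent at `a` falls faster. -/
theorem rpowTangent_le_rpowTangent {a b : ℝ} (hr0 : 0 ≤ r) (hr1 : r ≤ 1) (ha : 0 < a)
    (hab : a ≤ b) (hs : s ≤ a) : rpowTangent r a s ≤ rpowTangent r b s := by
  have hval : a ^ r ≤ rpowTangent r b a := rpow_le_rpowTangent hr0 hr1 (ha.trans_le hab) ha.le
  have hslope : b ^ (r - 1) ≤ a ^ (r - 1) := Real.rpow_le_rpow_of_nonpos ha hab (by linarith)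
  unfold rpowTangent at hval ⊢
  nlinarith [mul_le_mul_of_nonneg_left hslope hr0]

end rpowTangent

section psi

variable {p ε s t : ℝ}

theorem psi_of_lt (hε : 0 < ε) (hs : s < ε ^ 2) :
    psi p ε s = rpowTangent (p / 2) (ε ^ 2) s := by
  have hE : 0 < ε ^ 2 := by positivity
  have hpow : (ε ^ 2) ^ (p / 2) = (ε ^ 2) ^ (p / 2 - 1) * ε ^ 2 := by
    rw [Real.rpow_sub_one hE.ne', div_mul_cancel₀ _ hE.ne']
  have hdiv : ε ^ (2 - p) = ((ε ^ 2) ^ (p / 2 - 1))⁻¹ := by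
    rw [← Real.rpow_neg hE.le, ← sq_rpow_half hε.le]
    ring_nf
  rw [psi, if_pos hs, rpowTangent, hdiv, ← sq_rpow_half hε.le p, hpow]
  generalize (ε ^ 2) ^ (p / 2 - 1) = y
  rw [div_inv_eq_mul]
  ring

theorem psi_of_le (hs : ε ^ 2 ≤ s) : psi p ε s = s ^ (p / 2) := by
  rw [psi, if_neg hs.not_gt]

theorem psi_eq_rpowTangent_max (hε : 0 < ε) :
    psi p ε t = rpowTangent (p / 2) (max (ε ^ 2) t) t := by
  rcases lt_or_ge t (ε ^ 2) with hlt | hle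
  · rw [psi_of_lt hε hlt, max_eq_left hlt.le]
  · rw [psi_of_le hle, max_eq_right hle, rpowTangent, sub_self, mul_zero, add_zero]

theorem psiDeriv_eq (hε : 0 < ε) : psiDeriv p ε t = p / 2 * max (ε ^ 2) t ^ (p / 2 - 1) := by
  rw [psiDeriv, show p / 2 - 1 = (p - 2) / 2 by ring]
  split_ifs with hlt
  · rw [max_eq_left hlt.le, sq_rpow_half hε.le]
  · rw [max_eq_right (not_lt.mp hlt)]

theorem psi_add_psiDeriv_mul_sub (hε : 0 < ε) :
    psi p ε t + psiDeriv p ε t * (s - t) = rpowTangent (p / 2) (max (ε ^ 2) t) s := by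
  rw [psi_eq_rpowTangent_max hε, psiDeriv_eq hε, rpowTangent_add_mul_sub]

theorem psi_nonneg (hp0 : 0 ≤ p) (hp2 : p ≤ 2) (hε : 0 ≤ ε) (hs : 0 ≤ s) : 0 ≤ psi p ε s := by
  unfold psi
  split_ifs
  · exact add_nonneg (by positivity) (mul_nonneg (by linarith) (by positivity))
  · positivity

theorem psi_le_rpowTangent (hp0 : 0 ≤ p) (hp2 : p ≤ 2) (hε : 0 ≤ ε) (ht : ε ^ 2 ≤ t)
    (ht0 : 0 < t) (hs : 0 ≤ s) : psi p ε s ≤ rpowTangent (p / 2) t s := by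
  rcases lt_or_ge s (ε ^ 2) with hlt | hle
  · have hε0 : 0 < ε := by nlinarith
    rw [psi_of_lt hε0 hlt]
    exact rpowTangent_le_rpowTangent (by linarith) (by linarith) (by positivity) ht hlt.le
  · rw [psi_of_le hle]
    exact rpow_le_rpowTangent (by linarith) (by linarith) ht0 hs

theorem psi_mono_of_le {ε' : ℝ} (hp0 : 0 ≤ p) (hp2 : p ≤ 2) (hε' : 0 ≤ ε') (hε'ε : ε' ≤ ε)
    (hs : 0 ≤ s) : psi p ε' s ≤ psi p ε s := by
  have hsq : ε' ^ 2 ≤ ε ^ 2 := pow_le_pow_left₀ hε' hε'ε 2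
  rcases lt_or_ge s (ε ^ 2) with hlt | hle
  · have hε0 : 0 < ε := by nlinarith
    rw [psi_of_lt hε0 hlt]
    exact psi_le_rpowTangent hp0 hp2 hε' hsq (by positivity) hs
  · rw [psi_of_le hle, psi_of_le (hsq.trans hle)]

theorem psi_le_psi_add_psiDeriv_mul_sub (hp0 : 0 ≤ p) (hp2 : p ≤ 2) (hε : 0 < ε) (hs : 0 ≤ s) :
    psi p ε s ≤ psi p ε t + psiDeriv p ε t * (s - t) := by
  rw [psi_add_psiDeriv_mul_sub hε]
  exact psi_le_rpowTangent hp0 hp2 hε.le (le_max_left _ _)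
    ((pow_pos hε 2).trans_le (le_max_left _ _)) hs

theorem psi_add_psiDeriv_mul_sub_le (hp0 : 0 ≤ p) (hp2 : p ≤ 2) (hε : 0 < ε) (ht : 0 ≤ t)
    (hs : 0 ≤ s) : psi p ε t + psiDeriv p ε t * (s - t) ≤
      (ε ^ 2) ^ (p / 2) + p / 2 * (ε ^ 2) ^ (p / 2 - 1) * (t + s) := by
  have hE : 0 < ε ^ 2 := by positivity
  have hpsi : psi p ε t ≤ rpowTangent (p / 2) (ε ^ 2) t :=
    psi_le_rpowTangent hp0 hp2 hε.le le_rfl hE ht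
  have hderiv : psiDeriv p ε t ≤ p / 2 * (ε ^ 2) ^ (p / 2 - 1) := by
    rw [psiDeriv_eq hε]
    exact mul_le_mul_of_nonneg_left
      (Real.rpow_le_rpow_of_nonpos hE (le_max_left _ _) (by linarith)) (by linarith)
  have hderiv0 : 0 ≤ psiDeriv p ε t := by
    rw [psiDeriv_eq hε]
    exact mul_nonneg (by linarith) (Real.rpow_nonneg (hE.le.trans (le_max_left _ _)) _)
  have hcoef : 0 ≤ p / 2 * (ε ^ 2) ^ (p / 2 - 1) := mul_nonneg (by linarith) (by positivity)
  unfold rpowTangent at hpsi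
  nlinarith [mul_le_mul_of_nonneg_right hderiv hs, mul_nonneg hderiv0 ht, mul_nonneg hcoef hE.le]

@[fun_prop]
theorem measurable_psi (p ε : ℝ) : Measurable (psi p ε) :=
  Measurable.ite (measurableSet_lt measurable_id measurable_const) (by fun_prop) (by fun_prop)

@[fun_prop]
theorem measurable_psiDeriv (p ε : ℝ) : Measurable (psiDeriv p ε) :=
  Measurable.ite (measurableSet_lt measurable_id measurable_const) (by fun_prop) (by fun_prop)

end psi

theorem integrable_and_integral_mono_of_nonneg_of_le {α : Type*} [MeasurableSpace α]
    {μ : Measure α} {f g h : α → ℝ} (hf : AEStronglyMeasurable f μ)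
    (hg : AEStronglyMeasurable g μ) (hh : Integrable h μ) (hf0 : ∀ x, 0 ≤ f x)
    (hfg : ∀ x, f x ≤ g x) (hgh : ∀ x, g x ≤ h x) :
    Integrable g μ ∧ Integrable f μ ∧ ∫ x, f x ∂μ ≤ ∫ x, g x ∂μ := by
  have hf_int : Integrable f μ := integrable_of_le_of_le (g₁ := 0) hf (ae_of_all _ hf0)
    (ae_of_all _ fun x => (hfg x).trans (hgh x)) (integrable_zero _ _ _) hh
  have hg_int : Integrable g μ :=
    integrable_of_le_of_le hg (ae_of_all _ hfg) (ae_of_all _ hgh) hf_int hh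
  exact ⟨hg_int, hf_int, integral_mono hf_int hg_int hfg⟩

theorem integral_psi_linearization_majorizes_general
    {d : ℕ} (Ω : Set (EuclideanSpace ℝ (Fin d)))
    (hΩ_bdd : Bornology.IsBounded Ω)
    (p ε ε' : ℝ) (hp0 : 0 < p) (hp1 : p < 1) (hε : 0 < ε) (hε'0 : 0 ≤ ε') (hε' : ε' ≤ ε)
    (u w : Lp ℝ 2 (volume.restrict Ω)) :
    Integrable (fun x => psi p ε (u x ^ 2) + psiDeriv p ε (u x ^ 2) * (w x ^ 2 - u x ^ 2))
      (volume.restrict Ω) ∧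
    Integrable (fun x => psi p ε' (w x ^ 2)) (volume.restrict Ω) ∧
    ∫ x, psi p ε' (w x ^ 2) ∂(volume.restrict Ω) ≤
      ∫ x, psi p ε (u x ^ 2) + psiDeriv p ε (u x ^ 2) * (w x ^ 2 - u x ^ 2)
        ∂(volume.restrict Ω) := by
  have : IsFiniteMeasure (volume.restrict Ω) :=
    isFiniteMeasure_restrict.2 hΩ_bdd.measure_lt_top.ne
  have hp2 : p ≤ 2 := by linarith
  have hu : AEMeasurable u (volume.restrict Ω) := (Lp.aestronglyMeasurable u).aemeasurable
  have hw : AEMeasurable w (volume.restrict Ω) := (Lp.aestronglyMeasurable w).aemeasurable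
  refine integrable_and_integral_mono_of_nonneg_of_le
    (by fun_prop : AEMeasurable _ _).aestronglyMeasurable
    (by fun_prop : AEMeasurable _ _).aestronglyMeasurable
    ((integrable_const ((ε ^ 2) ^ (p / 2))).add
      (((Lp.memLp u).integrable_sq.add (Lp.memLp w).integrable_sq).const_mul
        (p / 2 * (ε ^ 2) ^ (p / 2 - 1))))
    (fun x => psi_nonneg hp0.le hp2 hε'0 (sq_nonneg _))
    (fun x => (psi_mono_of_le hp0.le hp2 hε'0 hε' (sq_nonneg _)).trans
      (psi_le_psi_add_psiDeriv_mul_sub hp0.le hp2 hε (sq_nonneg _)))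
    (fun x => psi_add_psiDeriv_mul_sub_le hp0.le hp2 hε (sq_nonneg _) (sq_nonneg _))

/-- on a bounded domain `Ω ⊂ ℝ^d`, for `p ∈ (0,1)`, `ε > 0`, `0 ≤ ε' ≤ ε` and
`u, w ∈ L²(Ω)`, all integrals are finite and
`∫_Ω [ψ_ε(u²) + ψ_ε'(u²)(w² − u²)] dx ≥ ∫_Ω ψ_{ε'}(w²) dx`. -/
theorem integral_psi_linearization_majorizes
    {d : ℕ} (hd : 1 ≤ d) (Ω : Set (EuclideanSpace ℝ (Fin d)))
    (hΩ_open : IsOpen Ω) (hΩ_conn : IsConnected Ω) (hΩ_bdd : Bornology.IsBounded Ω)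
    (p ε ε' : ℝ) (hp0 : 0 < p) (hp1 : p < 1) (hε : 0 < ε) (hε'0 : 0 ≤ ε') (hε' : ε' ≤ ε)
    (u w : Lp ℝ 2 (volume.restrict Ω)) :
    Integrable (fun x => psi p ε (u x ^ 2) + psiDeriv p ε (u x ^ 2) * (w x ^ 2 - u x ^ 2))
      (volume.restrict Ω) ∧
    Integrable (fun x => psi p ε' (w x ^ 2)) (volume.restrict Ω) ∧
    ∫ x, psi p ε' (w x ^ 2) ∂(volume.restrict Ω) ≤
      ∫ x, psi p ε (u x ^ 2) + psiDeriv p ε (u x ^ 2) * (w x ^ 2 - u x ^ 2)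
        ∂(volume.restrict Ω) :=
  integral_psi_linearization_majorizes_general Ω hΩ_bdd p ε ε' hp0 hp1 hε hε'0 hε' u w
end

section
/- Let p ∈ (0,1), β > 0, α ≥ 0, r > 0, ε ≥ 0 and ū ∈ ℝ. If v ∈ ℝ with |v| > ε is a local minimizer of Φ(w) = β·ψ_ε(w²) + (α/2)·w² + (1/(2r))·(w − ū)², then |v| ≥ (r·β·p·(1 − p)/(1 + α·r))^{1/(2−p)}. -/
open Filter Topology

theorem IsLocalMin.deriv_deriv_nonneg {f : ℝ → ℝ} {a : ℝ} (h : IsLocalMin f a)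
    (hc : ContinuousAt f a) : 0 ≤ deriv (deriv f) a := by
  by_contra! hneg
  -- By the second-derivative test `a` is also a local maximum, so `f` is locally constant.
  have hmax : IsLocalMax f a := isLocalMax_of_deriv_deriv_neg hneg h.deriv_eq_zero hc
  have hconst : f =ᶠ[𝓝 a] fun _ => f a := (h.and hmax).mono fun x hx => le_antisymm hx.2 hx.1
  have hderiv : deriv f =ᶠ[𝓝 a] fun _ => 0 :=
    hconst.eventuallyEq_nhds.mono fun x hx => by rw [hx.deriv_eq, deriv_const]
  rw [hderiv.deriv_eq, deriv_const] at hneg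
  exact hneg.false

theorem psi_sq_of_le_abs {p ε w : ℝ} (hε : 0 ≤ ε) (hw : ε ≤ |w|) : psi p ε (w ^ 2) = |w| ^ p := by
  have hsq : ¬ w ^ 2 < ε ^ 2 := by
    rw [← sq_abs]
    exact not_lt.2 (pow_le_pow_left₀ hε hw 2)
  rw [psi, if_neg hsq, ← sq_abs, ← Real.rpow_natCast, ← Real.rpow_mul (abs_nonneg w)]
  congr 1
  ring

noncomputable def psiObjective (p β α r ε ubar w : ℝ) : ℝ :=
  β * psi p ε (w ^ 2) + α / 2 * w ^ 2 + 1 / (2 * r) * (w - ubar) ^ 2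

noncomputable def rpowObjective (p β α r ubar w : ℝ) : ℝ :=
  β * w ^ p + α / 2 * w ^ 2 + 1 / (2 * r) * (w - ubar) ^ 2

section

variable {p β α r ε ubar : ℝ}

theorem IsLocalMin.psiObjective_neg {v : ℝ} (h : IsLocalMin (psiObjective p β α r ε ubar) v) :
    IsLocalMin (psiObjective p β α r ε (-ubar)) (-v) := by
  have hsymm : psiObjective p β α r ε (-ubar) = psiObjective p β α r ε ubar ∘ Neg.neg := by
    funext w
    simp only [psiObjective, Function.comp_apply, neg_sq]
    ring
  rw [hsymm]
  exact IsLocalMin.comp_continuous (by rwa [neg_neg]) continuous_neg.continuousAt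

theorem psiObjective_eventuallyEq_rpowObjective (hε : 0 ≤ ε) {v : ℝ} (hv : ε < v) :
    psiObjective p β α r ε ubar =ᶠ[𝓝 v] rpowObjective p β α r ubar := by
  filter_upwards [lt_mem_nhds hv] with w hw
  have hw' : ε ≤ |w| := hw.le.trans (le_abs_self w)
  rw [psiObjective, rpowObjective, psi_sq_of_le_abs hε hw', abs_of_pos (hε.trans_lt hw)]

theorem hasDerivAt_rpowObjective {w : ℝ} (hw : 0 < w) :
    HasDerivAt (rpowObjective p β α r ubar) (β * p * w ^ (p - 1) + α * w + (w - ubar) / r) w := by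
  have h₁ : HasDerivAt (fun w : ℝ => w ^ p) (p * w ^ (p - 1)) w :=
    Real.hasDerivAt_rpow_const (Or.inl hw.ne')
  have h₂ : HasDerivAt (fun w : ℝ => w ^ 2) (2 * w) w := by simpa using hasDerivAt_pow 2 w
  have h₃ : HasDerivAt (fun w : ℝ => (w - ubar) ^ 2) (2 * (w - ubar)) w := by
    simpa [Function.comp_def] using
      (hasDerivAt_pow 2 (w - ubar)).comp w ((hasDerivAt_id w).sub_const ubar)
  exact (((h₁.const_mul β).add (h₂.const_mul (α / 2))).add
    (h₃.const_mul (1 / (2 * r)))).congr_deriv (by ring)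

theorem deriv_deriv_rpowObjective {v : ℝ} (hv : 0 < v) :
    deriv (deriv (rpowObjective p β α r ubar)) v = β * p * (p - 1) * v ^ (p - 2) + α + 1 / r := by
  have hderiv : deriv (rpowObjective p β α r ubar) =ᶠ[𝓝 v]
      fun w => β * p * w ^ (p - 1) + α * w + (w - ubar) / r := by
    filter_upwards [lt_mem_nhds hv] with w hw using (hasDerivAt_rpowObjective hw).deriv
  have hrpow : HasDerivAt (fun w : ℝ => w ^ (p - 1)) ((p - 1) * v ^ (p - 2)) v := by
    convert Real.hasDerivAt_rpow_const (Or.inl hv.ne') using 3; ring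
  rw [hderiv.deriv_eq]
  exact ((((hrpow.const_mul (β * p)).add ((hasDerivAt_id v).const_mul α)).add
    (((hasDerivAt_id v).sub_const ubar).div_const r)).congr_deriv (by ring)).deriv

theorem rpow_le_of_curvature_nonneg {v : ℝ} (hp0 : 0 ≤ p) (hp1 : p ≤ 1) (hβ : 0 ≤ β)
    (hα : 0 ≤ α) (hr : 0 < r) (hv : 0 < v) (h : 0 ≤ β * p * (p - 1) * v ^ (p - 2) + α + 1 / r) :
    (r * β * p * (1 - p) / (1 + α * r)) ^ ((1 : ℝ) / (2 - p)) ≤ v := by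
  have hαr : 0 < 1 + α * r := by positivity
  have hvpow : 0 < v ^ (2 - p) := Real.rpow_pos_of_pos hv _
  have hcancel : v ^ (p - 2) * v ^ (2 - p) = 1 := by
    rw [← Real.rpow_add hv]; norm_num
  have hexpand : r * v ^ (2 - p) * (β * p * (p - 1) * v ^ (p - 2) + α + 1 / r) =
      (1 + α * r) * v ^ (2 - p) - r * β * p * (1 - p) := by
    field_simp
    linear_combination (r * β * p * (p - 1)) * hcancel
  have hkey : r * β * p * (1 - p) ≤ (1 + α * r) * v ^ (2 - p) := by
    have := mul_nonneg (mul_nonneg hr.le hvpow.le) h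
    rw [hexpand] at this
    linarith
  have hbase : 0 ≤ r * β * p * (1 - p) / (1 + α * r) := by
    have := sub_nonneg.2 hp1
    positivity
  rw [one_div, Real.rpow_inv_le_iff_of_pos hbase hv.le (by linarith), div_le_iff₀ hαr]
  linarith

end

/-- any local minimizer `v` of
`Φ(w) = β·ψ_ε(w²) + (α/2)·w² + (1/(2r))·(w − ū)²` with `|v| > ε` satisfies
`|v| ≥ (r·β·p·(1 − p)/(1 + α·r))^{1/(2−p)}`. -/
theorem localMin_lower_bound (p β α r ε ubar : ℝ)
    (hp0 : 0 < p) (hp1 : p < 1) (hβ : 0 < β) (hα : 0 ≤ α) (hr : 0 < r) (hε : 0 ≤ ε)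
    (v : ℝ) (hv : ε < |v|)
    (hmin : IsLocalMin (fun w : ℝ =>
      β * psi p ε (w ^ 2) + α / 2 * w ^ 2 + 1 / (2 * r) * (w - ubar) ^ 2) v) :
    (r * β * p * (1 - p) / (1 + α * r)) ^ ((1 : ℝ) / (2 - p)) ≤ |v| := by
  change IsLocalMin (psiObjective p β α r ε ubar) v at hmin
  wlog hv0 : 0 < v generalizing v ubar
  · have hv0' : 0 < -v := by
      rw [abs_of_nonpos (not_lt.1 hv0)] at hv
      linarith
    simpa only [abs_neg] using this (-ubar) (-v) (by rwa [abs_neg]) hmin.psiObjective_neg hv0'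
  rw [abs_of_pos hv0] at hv ⊢
  have hsmooth : IsLocalMin (rpowObjective p β α r ubar) v :=
    hmin.congr (psiObjective_eventuallyEq_rpowObjective hε hv)
  have hcurv := hsmooth.deriv_deriv_nonneg (hasDerivAt_rpowObjective hv0).continuousAt
  rw [deriv_deriv_rpowObjective hv0] at hcurv
  exact rpow_le_of_curvature_nonneg hp0.le hp1.le hβ.le hα hr hv0 hcurv
end

section
/- Let Ω ⊂ ℝ^d (d ≥ 1) be a bounded domain, p ∈ (0,1), β > 0, α ≥ 0, r₀ > 0, and a, b ∈ L²(Ω) with a < b a.e. Let f : L²(Ω) → ℝ be Fréchet differentiable with Lipschitz continuous gradient ∇f (the L²-Riesz representative). Let (ε_k) ⊂ (0,∞) with ε_k → 0 and (u_k) ⊂ U_ad with u_k → ū strongly in L²(Ω). Define P_k ∈ L²(Ω) pointwise a.e. by P_k(x) = proj_{[a(x), b(x)]}( (u_k(x) − r₀·∇f(u_k)(x)) / (1 + α·r₀ + 2β·r₀·ψ_{ε_k}'(u_k(x)²)) ). If ‖P_k − u_k‖_{L²(Ω)} → 0, then for a.e. x with ū(x) ≠ 0: −∇f(ū)(x) −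 α·ū(x) ≤ β·p·|ū(x)|^{p−2}·ū(x) if ū(x) = a(x), −∇f(ū)(x) − α·ū(x) = β·p·|ū(x)|^{p−2}·ū(x) if a(x) < ū(x) < b(x), and −∇f(ū)(x) − α·ū(x) ≥ β·p·|ū(x)|^{p−2}·ū(x) if ū(x) = b(x) (here |ū|^{p−2}ū means sign(ū)·|ū|^{p−1}). -/
open MeasureTheory Filter Topology RealInnerProductSpace

theorem aux_pointwise (p β α r₀ A B U G : ℝ) (hβ : 0 < β) (hr₀ : 0 < r₀)
    (hne : U ≠ 0) (hAB : A < B)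
    (hkey : U = min B (max A ((U - r₀ * G) /
      (1 + α * r₀ + 2 * β * r₀ * (p / 2 * (U ^ 2) ^ ((p - 2) / 2))))))
    (hDpos : 0 < 1 + α * r₀ + 2 * β * r₀ * (p / 2 * (U ^ 2) ^ ((p - 2) / 2))) :
    (U = A → -G - α * U ≤ β * p * (Real.sign U * |U| ^ (p - 1))) ∧
    (A < U ∧ U < B → -G - α * U = β * p * (Real.sign U * |U| ^ (p - 1))) ∧
    (U = B → β * p * (Real.sign U * |U| ^ (p - 1)) ≤ -G - α * U) := by
  have hUabs : (U ^ 2 : ℝ) ^ ((p - 2) / 2) = |U| ^ (p - 2) := by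
    rw [← sq_abs, ← Real.rpow_natCast |U| 2, ← Real.rpow_mul (abs_nonneg U)]
    congr 1
    push_cast
    ring
  have hUS : U * (U ^ 2 : ℝ) ^ ((p - 2) / 2) = Real.sign U * |U| ^ (p - 1) := by
    rw [hUabs]
    rcases hne.lt_or_gt with h | h
    · rw [Real.sign_of_neg h, abs_of_neg h,
        show p - 1 = 1 + (p - 2) by ring, Real.rpow_add (by linarith), Real.rpow_one]
      ring
    · rw [Real.sign_of_pos h, abs_of_pos h,
        show p - 1 = 1 + (p - 2) by ring, Real.rpow_add h, Real.rpow_one]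
      ring
  set S := Real.sign U * |U| ^ (p - 1) with hS
  set T := (U - r₀ * G) /
      (1 + α * r₀ + 2 * β * r₀ * (p / 2 * (U ^ 2) ^ ((p - 2) / 2))) with hT
  have hTD : T * (1 + α * r₀ + 2 * β * r₀ * (p / 2 * (U ^ 2) ^ ((p - 2) / 2)))
      = U - r₀ * G := div_mul_cancel₀ _ hDpos.ne'
  have hTX : (T - U) * (1 + α * r₀ + 2 * β * r₀ * (p / 2 * (U ^ 2) ^ ((p - 2) / 2)))
      = r₀ * (-G - α * U - β * p * S) := by
    linear_combination hTD - (β * p * r₀) * hUS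
  refine ⟨?_, ?_, ?_⟩
  · intro hUA
    have hUB : U < B := by rw [hUA]; exact hAB
    have hTle : T ≤ U := by
      by_contra hc
      push_neg at hc
      rw [max_eq_right (by linarith : A ≤ T)] at hkey
      rcases min_cases B T with ⟨e, _⟩ | ⟨e, _⟩ <;> rw [e] at hkey <;> linarith
    have h1 : r₀ * (-G - α * U - β * p * S) ≤ 0 := by
      rw [← hTX]
      exact mul_nonpos_of_nonpos_of_nonneg (by linarith) hDpos.le
    have h2 : -G - α * U - β * p * S ≤ 0 := by
      by_contra hc2
      push_neg at hc2
      nlinarith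
    linarith
  · rintro ⟨hA, hB⟩
    have hTeq : T = U := by
      rcases le_or_gt T A with h | h
      · rw [max_eq_left h, min_eq_right hAB.le] at hkey; linarith
      · rw [max_eq_right h.le] at hkey
        rcases min_cases B T with ⟨e, _⟩ | ⟨e, _⟩ <;> rw [e] at hkey
        · linarith
        · exact hkey.symm
    rw [hTeq] at hTX
    simp only [sub_self, zero_mul] at hTX
    have hX : -G - α * U - β * p * S = 0 :=
      (mul_eq_zero.mp hTX.symm).resolve_left hr₀.ne'
    linarith
  · intro hUB
    have hUA : A < U := by rw [hUB]; exact hAB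
    have hTge : U ≤ T := by
      by_contra hc
      push_neg at hc
      have hmb : max A T < B := by
        rcases max_cases A T with ⟨e, _⟩ | ⟨e, _⟩ <;> rw [e] <;> linarith
      rw [min_eq_right hmb.le] at hkey
      rcases max_cases A T with ⟨e, _⟩ | ⟨e, _⟩ <;> rw [e] at hkey <;> linarith
    have h1 : 0 ≤ r₀ * (-G - α * U - β * p * S) := by
      rw [← hTX]
      exact mul_nonneg (by linarith) hDpos.le
    have h2 : 0 ≤ -G - α * U - β * p * S := by
      by_contra hc2
      push_neg at hc2
      nlinarith
    linarith

/-- stationarity of limits of the smoothed proximal iteration. If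
`ε_k → 0`, `u_k ∈ U_ad` with `u_k → ū` in `L²(Ω)`, `P_k` is given a.e. by
`P_k = proj_{[a,b]}((u_k − r₀∇f(u_k))/(1 + αr₀ + 2βr₀ ψ_{ε_k}'(u_k²)))` and
`‖P_k − u_k‖ → 0`, then a.e. on `{ū ≠ 0}` the first-order conditions hold:
`−∇f(ū) − αū ≤ βp|ū|^{p−2}ū` where `ū = a`, equality where `a < ū < b`, and
`−∇f(ū) − αū ≥ βp|ū|^{p−2}ū` where `ū = b`. -/
theorem limit_stationarity
    {d : ℕ} (hd : 1 ≤ d) (Ω : Set (EuclideanSpace ℝ (Fin d)))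
    (hΩ_open : IsOpen Ω) (hΩ_conn : IsConnected Ω) (hΩ_bdd : Bornology.IsBounded Ω)
    (p β α r₀ : ℝ) (hp0 : 0 < p) (hp1 : p < 1) (hβ : 0 < β) (hα : 0 ≤ α) (hr₀ : 0 < r₀)
    (a b : Lp ℝ 2 (volume.restrict Ω))
    (hab : ∀ᵐ x ∂(volume.restrict Ω), a x < b x)
    (f : Lp ℝ 2 (volume.restrict Ω) → ℝ)
    (gradf : Lp ℝ 2 (volume.restrict Ω) → Lp ℝ 2 (volume.restrict Ω))
    (hf : ∀ u, HasGradientAt f (gradf u) u)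
    (L : NNReal) (hlip : LipschitzWith L gradf)
    (εk : ℕ → ℝ) (hεk_pos : ∀ k, 0 < εk k) (hεk : Tendsto εk atTop (nhds 0))
    (uk : ℕ → Lp ℝ 2 (volume.restrict Ω))
    (huk_ad : ∀ k, ∀ᵐ x ∂(volume.restrict Ω), a x ≤ uk k x ∧ uk k x ≤ b x)
    (ubar : Lp ℝ 2 (volume.restrict Ω))
    (huk : Tendsto uk atTop (nhds ubar))
    (P : ℕ → Lp ℝ 2 (volume.restrict Ω))
    (hP : ∀ k, ∀ᵐ x ∂(volume.restrict Ω),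
      P k x = min (b x) (max (a x)
        ((uk k x - r₀ * gradf (uk k) x) /
          (1 + α * r₀ + 2 * β * r₀ * psiDeriv p (εk k) (uk k x ^ 2)))))
    (hPk : Tendsto (fun k => ‖P k - uk k‖) atTop (nhds 0)) :
    ∀ᵐ x ∂(volume.restrict Ω), ubar x ≠ 0 →
      (ubar x = a x →
        -gradf ubar x - α * ubar x ≤ β * p * (Real.sign (ubar x) * |ubar x| ^ (p - 1))) ∧
      (a x < ubar x ∧ ubar x < b x →
        -gradf ubar x - α * ubar x = β * p * (Real.sign (ubar x) * |ubar x| ^ (p - 1))) ∧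
      (ubar x = b x →
        β * p * (Real.sign (ubar x) * |ubar x| ^ (p - 1)) ≤ -gradf ubar x - α * ubar x) := by
  -- P k → ubar in L²
  have hP_lim : Tendsto P atTop (𝓝 ubar) := by
    have h1 : Tendsto (fun k => P k - uk k) atTop (𝓝 0) :=
      tendsto_zero_iff_norm_tendsto_zero.mpr hPk
    have h2 := h1.add huk
    rw [zero_add] at h2
    exact h2.congr fun k => by abel
  have hG_lim : Tendsto (fun k => gradf (uk k)) atTop (𝓝 (gradf ubar)) :=
    (hlip.continuous.tendsto ubar).comp huk
  -- subsequences with a.e. convergence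
  obtain ⟨n1, hn1m, hn1⟩ := (tendstoInMeasure_of_tendsto_Lp huk).exists_seq_tendsto_ae
  obtain ⟨n2, hn2m, hn2⟩ :=
    (tendstoInMeasure_of_tendsto_Lp (hP_lim.comp hn1m.tendsto_atTop)).exists_seq_tendsto_ae
  obtain ⟨n3, hn3m, hn3⟩ :=
    (tendstoInMeasure_of_tendsto_Lp
      ((hG_lim.comp hn1m.tendsto_atTop).comp hn2m.tendsto_atTop)).exists_seq_tendsto_ae
  set φ : ℕ → ℕ := fun j => n1 (n2 (n3 j)) with hφ
  have hφm : StrictMono φ := hn1m.comp (hn2m.comp hn3m)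
  have hεφ : Tendsto (fun j => εk (φ j)) atTop (𝓝 0) := hεk.comp hφm.tendsto_atTop
  filter_upwards [hab, ae_all_iff.mpr hP, hn1, hn2, hn3] with x habx hPx hux hPx2 hgx
  intro hne
  -- pointwise convergences along φ
  have hu : Tendsto (fun j => uk (φ j) x) atTop (𝓝 (ubar x)) :=
    hux.comp (hn2m.comp hn3m).tendsto_atTop
  have hp2 : Tendsto (fun j => P (φ j) x) atTop (𝓝 (ubar x)) :=
    hPx2.comp hn3m.tendsto_atTop
  have hg : Tendsto (fun j => gradf (uk (φ j)) x) atTop (𝓝 (gradf ubar x)) := hgx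
  have hUpos : (0 : ℝ) < |ubar x| := abs_pos.mpr hne
  have hU2 : (0 : ℝ) < ubar x ^ 2 := by positivity
  -- eventually psiDeriv takes its second branch
  have hev1 : ∀ᶠ j in atTop, |ubar x| / 2 < |uk (φ j) x| :=
    hu.abs.eventually (eventually_gt_nhds (by linarith))
  have hev2 : ∀ᶠ j in atTop, εk (φ j) < |ubar x| / 2 :=
    hεφ.eventually (eventually_lt_nhds (by linarith))
  have hpsi : ∀ᶠ j in atTop, psiDeriv p (εk (φ j)) (uk (φ j) x ^ 2)
      = p / 2 * (uk (φ j) x ^ 2) ^ ((p - 2) / 2) := by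
    filter_upwards [hev1, hev2] with j h1 h2
    rw [psiDeriv, if_neg]
    push_neg
    have h0 := (hεk_pos (φ j)).le
    have h3 : εk (φ j) < |uk (φ j) x| := h2.trans h1
    nlinarith [sq_abs (uk (φ j) x)]
  -- denominator positivity at the limit
  have hEpos : (0 : ℝ) < (ubar x ^ 2) ^ ((p - 2) / 2) := Real.rpow_pos_of_pos hU2 _
  have hDpos : (0 : ℝ) < 1 + α * r₀ + 2 * β * r₀ *
      (p / 2 * (ubar x ^ 2) ^ ((p - 2) / 2)) := by
    have h5 : (0:ℝ) < 2 * β * r₀ * (p / 2 * (ubar x ^ 2) ^ ((p - 2) / 2)) :=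
      mul_pos (mul_pos (mul_pos two_pos hβ) hr₀) (mul_pos (by linarith) hEpos)
    nlinarith [mul_nonneg hα hr₀.le]
  -- convergence of the projected expression
  have hpow : Tendsto (fun j => (uk (φ j) x ^ 2) ^ ((p - 2) / 2)) atTop
      (𝓝 ((ubar x ^ 2) ^ ((p - 2) / 2))) :=
    (Real.continuousAt_rpow_const _ _ (Or.inl hU2.ne')).tendsto.comp (hu.pow 2)
  have hden : Tendsto (fun j => 1 + α * r₀ + 2 * β * r₀ *
      psiDeriv p (εk (φ j)) (uk (φ j) x ^ 2)) atTop
      (𝓝 (1 + α * r₀ + 2 * β * r₀ * (p / 2 * (ubar x ^ 2) ^ ((p - 2) / 2)))) := by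
    have h := ((hpow.const_mul (p / 2)).const_mul (2 * β * r₀)).const_add (1 + α * r₀)
    exact h.congr' (hpsi.mono fun j hj => by dsimp only; rw [hj])
  have hnum : Tendsto (fun j => uk (φ j) x - r₀ * gradf (uk (φ j)) x) atTop
      (𝓝 (ubar x - r₀ * gradf ubar x)) := hu.sub (hg.const_mul r₀)
  have hs := hnum.div hden hDpos.ne'
  have hmm : Tendsto (fun j => min (b x) (max (a x)
      ((uk (φ j) x - r₀ * gradf (uk (φ j)) x) /
        (1 + α * r₀ + 2 * β * r₀ * psiDeriv p (εk (φ j)) (uk (φ j) x ^ 2))))) atTop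
      (𝓝 (min (b x) (max (a x) ((ubar x - r₀ * gradf ubar x) /
        (1 + α * r₀ + 2 * β * r₀ * (p / 2 * (ubar x ^ 2) ^ ((p - 2) / 2))))))) :=
    Tendsto.min tendsto_const_nhds (Tendsto.max tendsto_const_nhds hs)
  have hkey : ubar x = min (b x) (max (a x) ((ubar x - r₀ * gradf ubar x) /
      (1 + α * r₀ + 2 * β * r₀ * (p / 2 * (ubar x ^ 2) ^ ((p - 2) / 2))))) :=
    tendsto_nhds_unique hp2 (hmm.congr fun j => (hPx (φ j)).symm)
  exact aux_pointwise p β α r₀ (a x) (b x) (ubar x) (gradf ubar x) hβ hr₀ hne habx hkey hDpos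
end

section
/- Let p ∈ (0,1), β > 0, α ≥ 0, ε ≥ 0, r > 0 and w ∈ ℝ with w ≥ 0. Then every global minimizer v ∈ ℝ of v ↦ (1/(2r))·(v − w)² + (α/2)·v² + β·ψ_ε(v²) satisfies 0 ≤ v ≤ w. -/
lemma psi_mono (p ε : ℝ) (hp0 : 0 < p) (hp1 : p < 1) (hε : 0 ≤ ε)
    {s t : ℝ} (hs : 0 ≤ s) (hst : s ≤ t) : psi p ε s ≤ psi p ε t := by
  unfold psi
  split_ifs with h1 h2 h2
  · have hεp : (0:ℝ) < ε := by nlinarith [sq_nonneg ε]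
    have hpow : (0:ℝ) < ε ^ (2 - p) := Real.rpow_pos_of_pos hεp _
    have : p / 2 * s / ε ^ (2 - p) ≤ p / 2 * t / ε ^ (2 - p) := by
      gcongr
    linarith
  · have hεp : (0:ℝ) < ε := by nlinarith [sq_nonneg ε]
    have hpow : (0:ℝ) < ε ^ (2 - p) := Real.rpow_pos_of_pos hεp _
    have key : ε ^ 2 / ε ^ (2 - p) = ε ^ p := by
      rw [← Real.rpow_natCast ε 2, ← Real.rpow_sub hεp]
      norm_num
    have h3 : p / 2 * s / ε ^ (2 - p) ≤ p / 2 * (ε^2) / ε ^ (2-p) := by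
      gcongr
    have h4 : p / 2 * (ε^2) / ε ^ (2-p) = p/2 * ε ^ p := by
      rw [mul_div_assoc, key]
    have h5 : (ε^2 : ℝ) ^ (p/2) = ε ^ p := by
      rw [← Real.rpow_natCast ε 2, ← Real.rpow_mul hε]
      congr 1
      ring
    have h6 : ε ^ p ≤ t ^ (p/2) := by
      rw [← h5]
      exact Real.rpow_le_rpow (sq_nonneg ε) (le_of_not_gt h2) (by linarith)
    nlinarith [h6]
  · linarith [le_of_not_gt h1, hst]
  · exact Real.rpow_le_rpow hs hst (by linarith)

/-- for `w ≥ 0`, every global minimizer `v` of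
`v ↦ (1/(2r))(v − w)² + (α/2)v² + β ψ_ε(v²)` satisfies `0 ≤ v ≤ w`. -/
theorem scalar_prox_sign (p β α ε r w : ℝ)
    (hp0 : 0 < p) (hp1 : p < 1) (hβ : 0 < β) (hα : 0 ≤ α) (hε : 0 ≤ ε) (hr : 0 < r)
    (hw : 0 ≤ w) (v : ℝ)
    (hmin : ∀ z : ℝ,
      1 / (2 * r) * (v - w) ^ 2 + α / 2 * v ^ 2 + β * psi p ε (v ^ 2) ≤
      1 / (2 * r) * (z - w) ^ 2 + α / 2 * z ^ 2 + β * psi p ε (z ^ 2)) :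
    0 ≤ v ∧ v ≤ w := by
  have hrinv : (0:ℝ) < 1 / (2*r) := by positivity
  constructor
  · by_contra hv
    push_neg at hv
    have h0 := hmin 0
    have hψ : psi p ε (0^2) ≤ psi p ε (v^2) := by
      apply psi_mono p ε hp0 hp1 hε (by norm_num)
      nlinarith
    have hq : (0:ℝ) < (v - w)^2 - (0 - w)^2 := by nlinarith
    set s0 := psi p ε (0 ^ 2)
    set s1 := psi p ε (v ^ 2)
    nlinarith [mul_pos hrinv hq, mul_nonneg hβ.le (sub_nonneg.mpr hψ),
      mul_nonneg hα (sq_nonneg v)]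
  · by_contra hv
    push_neg at hv
    have h0 := hmin w
    have hψ : psi p ε (w^2) ≤ psi p ε (v^2) := by
      apply psi_mono p ε hp0 hp1 hε (sq_nonneg w)
      nlinarith
    have hq : (0:ℝ) < (v - w)^2 - (w - w)^2 := by nlinarith
    set s0 := psi p ε (w ^ 2)
    set s1 := psi p ε (v ^ 2)
    nlinarith [mul_pos hrinv hq, mul_nonneg hβ.le (sub_nonneg.mpr hψ),
      mul_nonneg hα (show (0:ℝ) ≤ v^2 - w^2 by nlinarith)]
end
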